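/- arXiv:1110.0383 — 3 statements merged into one kernel-verified Lean document; each statement's English description precedes it below -/
import Mathlib

section
/- Let G be a finitely generated abelian group, A a commutative ring, and B = A[T₁, …, T_r] a polynomial ring endowed with a G-grading in which A ⊆ B₀ and each variable T_j is homogeneous. Let I ⊆ B be a monomial ideal (an ideal generated by monomials in T₁, …, T_r). Then B/I admits a Stanley decomposition: there exist finitely many homogeneous elements u₁, …, u_m ∈ B/I and subsets Z₁, …, Z_m (possibly empty) of {T₁, …, T_r} such that, as A-modules, B/I = ⊕_{i=1}^m u_i A[Z_i], where u_i A[Z_i] denotes the A-submodule of B/I spanned by the elements u_i·w with w a monomial in the variables of Z_i. -/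
/-!
Modulo a monomial ideal with exponent set `s`, the monomials whose exponents lie outside the upper
closure of `s` are `A`-linearly independent and span `B/I` (all other monomials vanish), so it
suffices to partition this set of standard exponents into finitely many disjoint cones `δ + ℕ^Z`;
the apex monomial `T^δ` of a cone is homogeneous for every grading. By Dickson's lemma the upper
closure is generated by a finite set `F`. Induct on the variables: fixing the exponent `k` of
`T_j`, the standard exponents form the standard set of a monomial ideal in the other variables,
and these slices stop changing once `k` reaches the largest `j`-th exponent `N` occurring in `F`.
So the cones of the slices `k < N` are kept as they are, and those of the slice `N` get `T_j`
added to their variables.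
-/

open Finsupp Function Set

theorem exists_finset_upperClosure_eq {α : Type*} [PartialOrder α] [WellQuasiOrderedLE α]
    (s : Set α) : ∃ F : Finset α, upperClosure (F : Set α) = upperClosure s := by
  have hpwo := Set.isPWO_of_wellQuasiOrderedLE s
  have hfin := (setOfPred_minimal_antichain (· ∈ s)).finite_of_partiallyWellOrderedOn
    (hpwo.mono (setOfPred_minimal_subset s))
  refine ⟨hfin.toFinset, SetLike.ext fun a => ?_⟩
  simp only [mem_upperClosure, Finite.coe_toFinset, mem_ofPred_eq]
  constructor
  · rintro ⟨b, hb, hba⟩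
    exact ⟨b, hb.prop, hba⟩
  · rintro ⟨b, hb, hba⟩
    obtain ⟨c, hcb, hc⟩ := hpwo.exists_le_minimal hb
    exact ⟨c, hc, hcb.trans hba⟩

section StanleyCone

variable {σ : Type*}

/-- The exponents of the monomials in `T^δ · A[Z]`. -/
def stanleyCone (δ : σ →₀ ℕ) (Z : Finset σ) : Set (σ →₀ ℕ) :=
  (δ + ·) '' {β | β.support ⊆ Z}

theorem mem_stanleyCone_iff {δ α : σ →₀ ℕ} {Z : Finset σ} :
    α ∈ stanleyCone δ Z ↔ ∀ i, δ i ≤ α i ∧ (i ∉ Z → α i = δ i) := by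
  constructor
  · rintro ⟨β, hβ, rfl⟩ i
    refine ⟨by simp, fun hi => ?_⟩
    simp [notMem_support_iff.1 fun h => hi (hβ h)]
  · intro h
    refine ⟨α - δ, fun i hi => ?_, ?_⟩
    · by_contra hiZ
      simp [(h i).2 hiZ] at hi
    · ext i
      simp [Nat.add_sub_cancel' (h i).1]

theorem support_subset_of_stanleyCone_subset {δ : σ →₀ ℕ} {Z V : Finset σ}
    (h : stanleyCone δ Z ⊆ {α | α.support ⊆ V}) : δ.support ⊆ V ∧ Z ⊆ V := by
  classical
  refine ⟨by simpa using h ⟨0, by simp, add_zero δ⟩, fun i hi => ?_⟩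
  have := h ⟨single i 1, by simpa using hi, rfl⟩
  exact this (by simp)

theorem mem_stanleyCone_add_single_iff [DecidableEq σ] {δ α : σ →₀ ℕ} {Z : Finset σ} {j : σ}
    {k N : ℕ} (hδ : δ j = 0) (hZ : j ∉ Z) (hk : k ≤ N) :
    α ∈ stanleyCone (δ + single j k) (if k = N then insert j Z else Z) ↔
      α.erase j ∈ stanleyCone δ Z ∧ min (α j) N = k := by
  have hmem : ∀ i ≠ j, (i ∈ if k = N then insert j Z else Z) ↔ i ∈ Z := fun i hij => by
    split_ifs <;> simp [hij]
  simp only [mem_stanleyCone_iff]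
  constructor
  · intro h
    refine ⟨fun i => ?_, ?_⟩
    · rcases eq_or_ne i j with rfl | hij
      · simp [hδ, hZ]
      · simpa [erase_ne hij, single_eq_of_ne hij, hmem i hij] using h i
    · have := h j
      simp only [coe_add, Pi.add_apply, hδ, single_eq_same, zero_add] at this
      split_ifs at this <;> simp [hZ] at this <;> omega
  · rintro ⟨h, rfl⟩ i
    rcases eq_or_ne i j with rfl | hij
    · simp only [coe_add, Pi.add_apply, hδ, single_eq_same, zero_add]
      split_ifs <;> simp [hZ]
      omega
    · rw [hmem i hij]
      simpa [erase_ne hij, single_eq_of_ne hij] using h i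

theorem le_iff_le_and_erase_le {γ α : σ →₀ ℕ} (j : σ) :
    γ ≤ α ↔ γ j ≤ α j ∧ γ.erase j ≤ α.erase j := by
  simp only [le_def]
  constructor
  · intro h
    refine ⟨h j, fun i => ?_⟩
    rcases eq_or_ne i j with rfl | hij
    · simp
    · simpa [erase_ne hij] using h i
  · rintro ⟨hj, h⟩ i
    rcases eq_or_ne i j with rfl | hij
    · exact hj
    · simpa [erase_ne hij] using h i

theorem mem_upperClosure_iff_erase_mem [DecidableEq σ] {F : Finset (σ →₀ ℕ)} {j : σ} {N : ℕ}
    (hN : ∀ γ ∈ F, γ j ≤ N) (α : σ →₀ ℕ) :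
    α ∈ upperClosure (F : Set (σ →₀ ℕ)) ↔
      α.erase j ∈ upperClosure (((F.filter (· j ≤ min (α j) N)).image (erase j) : Finset _) :
        Set (σ →₀ ℕ)) := by
  simp only [mem_upperClosure, Finset.coe_image, Finset.coe_filter, exists_mem_image,
    mem_ofPred_eq, le_iff_le_and_erase_le j (α := α), le_min_iff]
  exact exists_congr fun γ => ⟨fun ⟨hγ, h⟩ => ⟨⟨hγ, h.1, hN γ hγ⟩, h.2⟩,
    fun ⟨⟨hγ, h, _⟩, h'⟩ => ⟨hγ, h, h'⟩⟩

theorem exists_stanleyCone_partition (V : Finset σ) (F : Finset (σ →₀ ℕ)) :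
    ∃ (ι : Type) (_ : Finite ι) (δ : ι → σ →₀ ℕ) (Z : ι → Finset σ),
      Pairwise (Disjoint on fun i => stanleyCone (δ i) (Z i)) ∧
      ⋃ i, stanleyCone (δ i) (Z i) = {α | α.support ⊆ V} \ upperClosure (F : Set (σ →₀ ℕ)) := by
  classical
  induction V using Finset.induction_on generalizing F with
  | empty =>
    have hV : {α : σ →₀ ℕ | α.support ⊆ ∅} = {0} := by ext; simp
    by_cases h0 : (0 : σ →₀ ℕ) ∈ upperClosure (F : Set (σ →₀ ℕ))
    · refine ⟨Empty, inferInstance, Empty.elim, Empty.elim, fun i => i.elim, ?_⟩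
      rw [hV, iUnion_of_empty, eq_comm, sdiff_eq_empty, singleton_subset_iff]
      exact h0
    · refine ⟨Unit, inferInstance, fun _ => 0, fun _ => ∅, fun _ _ h => (h rfl).elim, ?_⟩
      rw [hV, iUnion_const, sdiff_eq_left.2 (disjoint_singleton_left.2 h0)]
      ext; simp [stanleyCone]
  | insert j V hj ih =>
    set N := F.sup (· j)
    have hN : ∀ γ ∈ F, γ j ≤ N := fun γ hγ => Finset.le_sup (f := (· j)) hγ
    choose ι hι δ Z hdisj hunion using fun k : ℕ => ih ((F.filter (· j ≤ k)).image (erase j))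
    have hcone : ∀ k i, δ k i j = 0 ∧ j ∉ Z k i := fun k i => by
      obtain ⟨hδ, hZ⟩ := support_subset_of_stanleyCone_subset
        (((subset_iUnion _ i).trans (hunion k).subset).trans sdiff_subset)
      exact ⟨notMem_support_iff.1 fun h => hj (hδ h), fun h => hj (hZ h)⟩
    have hmem_shift : ∀ (p : Σ k : Fin (N + 1), ι k) α,
        α ∈ stanleyCone (δ p.1 p.2 + single j (p.1 : ℕ))
            (if (p.1 : ℕ) = N then insert j (Z p.1 p.2) else Z p.1 p.2) ↔
          α.erase j ∈ stanleyCone (δ p.1 p.2) (Z p.1 p.2) ∧ min (α j) N = p.1 := fun p α =>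
      mem_stanleyCone_add_single_iff (hcone _ _).1 (hcone _ _).2 (Nat.le_of_lt_succ p.1.2)
    refine ⟨Σ k : Fin (N + 1), ι k, inferInstance, fun p => δ p.1 p.2 + single j (p.1 : ℕ),
      fun p => if (p.1 : ℕ) = N then insert j (Z p.1 p.2) else Z p.1 p.2, ?_, ?_⟩
    · rintro ⟨k, i⟩ ⟨k', i'⟩ hne
      refine Set.disjoint_left.2 fun α h h' => hne ?_
      rw [hmem_shift] at h h'
      obtain rfl : k = k' := Fin.ext (h.2.symm.trans h'.2)
      obtain rfl : i = i' := by_contra fun hii => Set.disjoint_left.1 (hdisj k hii) h.1 h'.1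
      rfl
    · ext α
      calc α ∈ ⋃ p : Σ k : Fin (N + 1), ι k, stanleyCone (δ p.1 p.2 + single j (p.1 : ℕ))
              (if (p.1 : ℕ) = N then insert j (Z p.1 p.2) else Z p.1 p.2)
          ↔ α.erase j ∈ ⋃ i, stanleyCone (δ (min (α j) N) i) (Z (min (α j) N) i) := by
            simp only [mem_iUnion, hmem_shift]
            constructor
            · rintro ⟨p, hp, hpα⟩
              rw [hpα]
              exact ⟨p.2, hp⟩
            · rintro ⟨i, hi⟩
              exact ⟨⟨⟨min (α j) N, Nat.lt_succ_of_le (min_le_right _ _)⟩, i⟩, hi, rfl⟩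
        _ ↔ _ := by
          simp only [hunion, mem_sdiff, mem_ofPred_eq, SetLike.mem_coe, support_erase,
            ← Finset.subset_insert_iff, ← mem_upperClosure_iff_erase_mem hN α]

end StanleyCone

theorem LinearIndepOn.iSupIndep_span_image {R M κ ι : Type*} [Ring R] [AddCommGroup M]
    [Module R M] {v : κ → M} {s : Set κ} (hv : LinearIndepOn R v s) {T : ι → Set κ}
    (hTs : ∀ i, T i ⊆ s) (hT : Pairwise (Disjoint on T)) :
    iSupIndep fun i => Submodule.span R (v '' T i) := by
  intro i
  have hdisj : Disjoint (T i) (⋃ j ≠ i, T j) :=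
    disjoint_iUnion₂_right.2 fun j hj => hT (Ne.symm hj)
  have := ((linearIndepOn_union_iff hdisj).1
    (hv.mono (union_subset (hTs i) (iUnion₂_subset fun j _ => hTs j)))).2.2
  rwa [image_iUnion₂, Submodule.span_iUnion₂] at this

namespace MvPolynomial

variable {σ R : Type*} [CommRing R] (s : Set (σ →₀ ℕ))

theorem linearIndepOn_mk_monomial_compl_upperClosure :
    LinearIndepOn R (fun α => Ideal.Quotient.mk (Ideal.span ((monomial · (1 : R)) '' s))
      (monomial α 1)) (upperClosure s : Set (σ →₀ ℕ))ᶜ := by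
  have hmono : LinearIndepOn R (monomial · (1 : R)) (upperClosure s : Set (σ →₀ ℕ))ᶜ := by
    simpa using (basisMonomials σ R).linearIndependent.linearIndepOn _
  refine hmono.map (f := (Ideal.Quotient.mkₐ R _).toLinearMap) (Submodule.disjoint_def.2 ?_)
  intro x hx hker
  replace hx : ↑x.support ⊆ (upperClosure s : Set (σ →₀ ℕ))ᶜ := by
    rwa [← mem_restrictSupport_iff, restrictSupport_eq_span, image_eq_range]
  rw [LinearMap.mem_ker, AlgHom.toLinearMap_apply, Ideal.Quotient.mkₐ_eq_mk,
    Ideal.Quotient.eq_zero_iff_mem, mem_ideal_span_monomial_image] at hker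
  refine support_eq_empty.1 (Finset.eq_empty_of_forall_notMem fun α hα => hx hα ?_)
  exact mem_upperClosure.2 (hker α hα)

theorem span_mk_monomial_compl_upperClosure :
    Submodule.span R ((fun α => Ideal.Quotient.mk (Ideal.span ((monomial · (1 : R)) '' s))
      (monomial α 1)) '' (upperClosure s : Set (σ →₀ ℕ))ᶜ) = ⊤ := by
  rw [eq_top_iff]
  rintro x -
  obtain ⟨p, rfl⟩ := Ideal.Quotient.mk_surjective x
  induction p using MvPolynomial.induction_on' with
  | monomial α c =>
    have hsmul : monomial α c = c • monomial α (1 : R) := by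
      rw [smul_monomial, smul_eq_mul, mul_one]
    rw [hsmul, ← Ideal.Quotient.mkₐ_eq_mk R, map_smul, Ideal.Quotient.mkₐ_eq_mk]
    refine Submodule.smul_mem _ c ?_
    by_cases hα : α ∈ upperClosure s
    · have hmem : monomial α (1 : R) ∈ Ideal.span ((monomial · (1 : R)) '' s) :=
        mem_ideal_span_monomial_image.2 fun β hβ => by
          rw [Finset.mem_singleton.1 (support_monomial_subset hβ)]
          exact mem_upperClosure.1 hα
      rw [Ideal.Quotient.eq_zero_iff_mem.2 hmem]
      exact Submodule.zero_mem _
    · exact Submodule.subset_span ⟨α, hα, rfl⟩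
  | add p q hp hq =>
    rw [map_add]
    exact Submodule.add_mem _ hp hq

end MvPolynomial

open MvPolynomial in
theorem exists_stanley_decomposition_of_monomial_ideal_general
    {G : Type*} [AddCommGroup G]
    {A : Type*} [CommRing A] {r : ℕ} (dT : Fin r → G)
    (I : Ideal (MvPolynomial (Fin r) A))
    (hI : ∃ s : Set (Fin r →₀ ℕ),
      I = Ideal.span ((fun α => MvPolynomial.monomial α (1 : A)) '' s)) :
    ∃ (m : ℕ) (u : Fin m → (MvPolynomial (Fin r) A ⧸ I)) (Z : Fin m → Finset (Fin r)),
      (∀ p, ∃ γ : G, u p ∈ Submodule.map (Ideal.Quotient.mkₐ A I).toLinearMap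
        (MvPolynomial.weightedHomogeneousSubmodule A dT γ)) ∧
      (⨆ p, Submodule.span A
        ((fun α => u p * Ideal.Quotient.mk I (MvPolynomial.monomial α (1 : A))) ''
          {α : Fin r →₀ ℕ | (α.support : Set (Fin r)) ⊆ (Z p : Set (Fin r))})) = ⊤ ∧
      iSupIndep (fun p => Submodule.span A
        ((fun α => u p * Ideal.Quotient.mk I (MvPolynomial.monomial α (1 : A))) ''
          {α : Fin r →₀ ℕ | (α.support : Set (Fin r)) ⊆ (Z p : Set (Fin r))})) := by
  obtain ⟨s, rfl⟩ := hI
  set v := fun α => Ideal.Quotient.mk (Ideal.span ((monomial · (1 : A)) '' s)) (monomial α 1)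
  obtain ⟨F, hF⟩ := exists_finset_upperClosure_eq s
  obtain ⟨ι, _, δ, Z, hdisj, hunion⟩ := exists_stanleyCone_partition Finset.univ F
  simp only [Finset.subset_univ, ofPred_true, ← compl_eq_univ_sdiff, hF] at hunion
  have himage : ∀ i, (fun α => v (δ i) * Ideal.Quotient.mk _ (monomial α 1)) ''
      {α | (α.support : Set (Fin r)) ⊆ Z i} = v '' stanleyCone (δ i) (Z i) := fun i => by
    simp only [stanleyCone, image_image, v, ← map_mul, monomial_mul, one_mul, Finset.coe_subset]
  let e := (Finite.equivFin ι).symm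
  refine ⟨Nat.card ι, fun p => v (δ (e p)), fun p => Z (e p),
    fun p => ⟨weight dT (δ (e p)), monomial _ 1, isWeightedHomogeneous_monomial _ _ _ rfl, rfl⟩,
    ?_, ?_⟩
  · simp only [himage]
    rw [← Submodule.span_iUnion, ← image_iUnion, e.surjective.iUnion_comp
      (fun i => stanleyCone (δ i) (Z i)), hunion, span_mk_monomial_compl_upperClosure]
  · simp only [himage]
    exact (linearIndepOn_mk_monomial_compl_upperClosure s).iSupIndep_span_image
      (fun p => hunion ▸ subset_iUnion (fun i => stanleyCone (δ i) (Z i)) (e p))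
      (hdisj.comp_of_injective e.injective)

/-- **Lemma (existence of Stanley decompositions of monomial quotients).**
Let `B = A[T₁,…,T_r]` be `G`-graded with each `T_j` homogeneous of degree `dT j`, and let
`I ⊆ B` be a monomial ideal.  Then `B/I` admits a Stanley decomposition: there are
finitely many homogeneous elements `u₁,…,u_m ∈ B/I` and subsets `Z₁,…,Z_m` of the
variables such that, as `A`-modules, `B/I = ⊕_p u_p·A[Z_p]`, where `u_p·A[Z_p]` is the
`A`-span of the products of `u_p` with the monomials in the variables of `Z_p`. -/
theorem exists_stanley_decomposition_of_monomial_ideal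
    {G : Type*} [AddCommGroup G] [AddGroup.FG G]
    {A : Type*} [CommRing A] {r : ℕ} (dT : Fin r → G)
    (I : Ideal (MvPolynomial (Fin r) A))
    (hI : ∃ s : Set (Fin r →₀ ℕ),
      I = Ideal.span ((fun α => MvPolynomial.monomial α (1 : A)) '' s)) :
    ∃ (m : ℕ) (u : Fin m → (MvPolynomial (Fin r) A ⧸ I)) (Z : Fin m → Finset (Fin r)),
      (∀ p, ∃ γ : G, u p ∈ Submodule.map (Ideal.Quotient.mkₐ A I).toLinearMap
        (MvPolynomial.weightedHomogeneousSubmodule A dT γ)) ∧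
      (⨆ p, Submodule.span A
        ((fun α => u p * Ideal.Quotient.mk I (MvPolynomial.monomial α (1 : A))) ''
          {α : Fin r →₀ ℕ | (α.support : Set (Fin r)) ⊆ (Z p : Set (Fin r))})) = ⊤ ∧
      iSupIndep (fun p => Submodule.span A
        ((fun α => u p * Ideal.Quotient.mk I (MvPolynomial.monomial α (1 : A))) ''
          {α : Fin r →₀ ℕ | (α.support : Set (Fin r)) ⊆ (Z p : Set (Fin r))})) :=
  exists_stanley_decomposition_of_monomial_ideal_general dT I hI
end

section
/- Let G be a finitely generated abelian group and γ₁, …, γ_r ∈ G. Then the submonoid ⟨γ₁, …, γ_r⟩ = {c₁γ₁ + ⋯ + c_rγ_r : c_i ∈ ℕ} of G can be written as a finite DISJOINT union ⟨γ₁, …, γ_r⟩ = ⨆_{j=1}^s ( σ_j + ⟨E_j⟩ ), where each σ_j ∈ ⟨γ₁, …, γ_r⟩, each E_j ⊆ {γ₁, …, γ_r} is a ℤ-linearly independent subset (possibly empty), and ⟨E_j⟩ is the (free) submonoid of G generated by E_j. -/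
/-!
Let `f : ℕ^r → G`, `c ↦ ∑ cᵢ γᵢ`. Keeping in every fibre of `f` its lexicographically least point
gives a set of normal forms on which `f` is a bijection onto `⟨γ₁, …, γ_r⟩`; since the
lexicographic order is compatible with addition, the normal forms form a lower set of `ℕ^r`.
Every lower set of `ℕ^r` is a finite disjoint union of translated coordinate orthants
`a + ℕ^F`: its slices along the first coordinate decrease, hence stabilise by Dickson's lemma,
and each of the finitely many distinct slices is decomposed by induction on `r`. The map `f`
sends `a + ℕ^F` onto `f a + ⟨γ(F)⟩`, and its injectivity there makes `γ(F)` linearly independent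
over `ℤ`: a relation splits into its positive and negative parts.
-/

open Set Function

theorem Antitone.exists_forall_ge_eq_of_isLowerSet {α : Type*} [Preorder α]
    [WellQuasiOrderedLE α] {M : ℕ → Set α} (hM : Antitone M) (hlow : ∀ k, IsLowerSet (M k)) :
    ∃ N, ∀ k ≥ N, M k = M N := by
  by_contra! h
  choose g hg hne using h
  have hdrop : ∀ N, ∃ x ∈ M N, x ∉ M (g N) := fun N =>
    not_subset.1 fun hsub => hne N ((hM (hg N)).antisymm hsub)
  choose x hx hx' using hdrop
  -- along the orbit `n j = g^[j] 0`, the point `x (n i)` lies outside all later sets `M (n j)`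
  set n : ℕ → ℕ := fun j => g^[j] 0
  have hn_succ : ∀ j, n (j + 1) = g (n j) := fun j => iterate_succ_apply' g j 0
  have hn : Monotone n := monotone_nat_of_le_succ fun j => (hg _).trans_eq (hn_succ j).symm
  obtain ⟨i, j, hij, hle⟩ := wellQuasiOrdered_le (fun j => x (n j))
  exact hx' (n i) (hlow _ hle (hM ((hn_succ i).symm.trans_le (hn hij)) (hx (n j))))

section

variable {r : ℕ}

section TranslatedOrthant

def translatedOrthant (a : Fin r → ℕ) (F : Finset (Fin r)) : Set (Fin r → ℕ) :=
  {c | a ≤ c ∧ ∀ i ∉ F, c i = a i}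

def HasStanleyDecomposition (M : Set (Fin r → ℕ)) : Prop :=
  ∃ (J : Type) (_ : Finite J) (a : J → Fin r → ℕ) (F : J → Finset (Fin r)),
    M = ⋃ j, translatedOrthant (a j) (F j) ∧
      Pairwise (Disjoint on fun j => translatedOrthant (a j) (F j))

theorem translatedOrthant_empty (a : Fin r → ℕ) : translatedOrthant a ∅ = {a} := by
  ext c
  simp only [translatedOrthant, Finset.notMem_empty, not_false_eq_true, forall_const,
    mem_ofPred_eq, mem_singleton_iff]
  exact ⟨fun h => funext h.2, fun h => ⟨h.ge, fun i => congrFun h i⟩⟩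

theorem translatedOrthant_eq_image_add (a : Fin r → ℕ) (F : Finset (Fin r)) :
    translatedOrthant a F = (a + ·) '' translatedOrthant 0 F := by
  ext c
  constructor
  · rintro ⟨hle, hc⟩
    obtain ⟨d, rfl⟩ := exists_add_of_le hle
    exact ⟨d, ⟨zero_le, fun i hi => by simpa using hc i hi⟩, rfl⟩
  · rintro ⟨d, ⟨-, hd⟩, rfl⟩
    exact ⟨le_add_of_nonneg_right zero_le, fun i hi => by simp [hd i hi]⟩

theorem Set.InjOn.translatedOrthant_zero {M : Type*} [Add M] {F : Type*}
    [FunLike F (Fin r → ℕ) M] [AddHomClass F (Fin r → ℕ) M] {f : F} {a : Fin r → ℕ}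
    {s : Finset (Fin r)} (h : InjOn f (translatedOrthant a s)) :
    InjOn f (translatedOrthant 0 s) := by
  rw [translatedOrthant_eq_image_add] at h
  intro d hd d' hd' hdd'
  exact add_left_cancel
    (h (mem_image_of_mem _ hd) (mem_image_of_mem _ hd') (by simp [map_add, hdd']))

theorem cons_mem_translatedOrthant_cons_iff {N k m : ℕ} (hk : k ≤ N) {a c : Fin r → ℕ}
    {F : Finset (Fin r)} :
    Fin.cons m c ∈ translatedOrthant (Fin.cons k a : Fin (r + 1) → ℕ)
        (if k = N then insert 0 (F.map (Fin.succEmb r)) else F.map (Fin.succEmb r)) ↔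
      min m N = k ∧ c ∈ translatedOrthant a F := by
  have hsucc (i : Fin r) : i.succ ∈ F.map (Fin.succEmb r) ↔ i ∈ F :=
    Finset.mem_map' (Fin.succEmb r)
  have hzero : (0 : Fin (r + 1)) ∉ F.map (Fin.succEmb r) := by simp [Fin.succ_ne_zero]
  simp only [translatedOrthant, mem_ofPred_eq, Fin.cons_le_cons, Fin.forall_fin_succ,
    Fin.cons_zero, Fin.cons_succ]
  split_ifs <;> grind

theorem Set.Finite.hasStanleyDecomposition {M : Set (Fin r → ℕ)} (hM : M.Finite) :
    HasStanleyDecomposition M := by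
  refine ⟨M, hM.to_subtype, (↑), fun _ => ∅, ?_, fun j j' hne => ?_⟩
  · simp only [translatedOrthant_empty, iUnion_of_singleton_coe]
  · simpa [onFun, translatedOrthant_empty, Subtype.val_inj] using hne

theorem IsLowerSet.hasStanleyDecomposition {M : Set (Fin r → ℕ)} (hM : IsLowerSet M) :
    HasStanleyDecomposition M := by
  induction r with
  | zero => exact (toFinite M).hasStanleyDecomposition
  | succ r ih =>
    set slice : ℕ → Set (Fin r → ℕ) := fun m => {c | Fin.cons m c ∈ M}
    have hslice_low : ∀ m, IsLowerSet (slice m) := fun m c c' hle hc =>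
      hM (Fin.cons_le_cons.2 ⟨le_rfl, hle⟩) hc
    have hslice_anti : Antitone slice := fun m m' hle c hc =>
      hM (Fin.cons_le_cons.2 ⟨hle, le_rfl⟩) hc
    obtain ⟨N, hN⟩ := hslice_anti.exists_forall_ge_eq_of_isLowerSet hslice_low
    have hslice_min : ∀ m, slice m = slice (min m N) := fun m => by
      rcases le_total m N with h | h
      · rw [min_eq_left h]
      · rw [min_eq_right h, hN m h]
    choose J _ a F hcover hdisj using fun k => ih (hslice_low k)
    -- the piece indexed by `⟨k, j⟩` consists of the points `c` with `min (c 0) N = k`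
    refine ⟨Σ k : Fin (N + 1), J k, inferInstance, fun p => Fin.cons (p.1 : ℕ) (a p.1 p.2),
      fun p => if (p.1 : ℕ) = N then insert 0 ((F p.1 p.2).map (Fin.succEmb r))
        else (F p.1 p.2).map (Fin.succEmb r), ?_, ?_⟩
    · ext c
      refine Fin.consCases (fun m t => ?_) c
      simp only [mem_iUnion, Sigma.exists,
        cons_mem_translatedOrthant_cons_iff (Nat.le_of_lt_succ (Fin.is_lt _))]
      change t ∈ slice m ↔ _
      rw [hslice_min, hcover, mem_iUnion]
      constructor
      · rintro ⟨j, hj⟩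
        exact ⟨⟨min m N, Nat.lt_succ_of_le (min_le_right m N)⟩, j, rfl, hj⟩
      · rintro ⟨k, j, hk, hj⟩
        rw [hk]
        exact ⟨j, hj⟩
    · rintro ⟨k, j⟩ ⟨k', j'⟩ hne
      refine disjoint_left.2 (Fin.consCases fun m t h h' => ?_)
      rw [cons_mem_translatedOrthant_cons_iff (Nat.le_of_lt_succ k.is_lt)] at h
      rw [cons_mem_translatedOrthant_cons_iff (Nat.le_of_lt_succ k'.is_lt)] at h'
      obtain rfl : k = k' := Fin.ext (h.1.symm.trans h'.1)
      have hjj' : j ≠ j' := fun hjj' => hne (hjj' ▸ rfl)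
      exact disjoint_left.1 (hdisj k hjj') h.2 h'.2

end TranslatedOrthant

section NormalForms

variable {M : Type*}

def normalForms (f : (Fin r → ℕ) → M) : Set (Fin r → ℕ) :=
  {c | ∀ c', f c' = f c → toLex c ≤ toLex c'}

theorem exists_mem_normalForms (f : (Fin r → ℕ) → M) (c : Fin r → ℕ) :
    ∃ m ∈ normalForms f, f m = f c := by
  obtain ⟨_, ⟨m, hfm, rfl⟩, hmin⟩ :=
    wellFounded_lt.has_min (toLex '' {c' | f c' = f c}) ⟨toLex c, c, rfl, rfl⟩
  exact ⟨m, fun c' hc' => not_lt.1 (hmin _ ⟨c', hc'.trans hfm, rfl⟩), hfm⟩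

theorem image_normalForms (f : (Fin r → ℕ) → M) : f '' normalForms f = range f :=
  (image_subset_range _ _).antisymm <| by
    rintro _ ⟨c, rfl⟩
    obtain ⟨m, hm, hfm⟩ := exists_mem_normalForms f c
    exact ⟨m, hm, hfm⟩

theorem injOn_normalForms (f : (Fin r → ℕ) → M) : InjOn f (normalForms f) :=
  fun _ hc _ hc' h => toLex_inj.1 ((hc _ h.symm).antisymm (hc' _ h))

theorem isLowerSet_normalForms [Add M] {F : Type*} [FunLike F (Fin r → ℕ) M]
    [AddHomClass F (Fin r → ℕ) M] (f : F) : IsLowerSet (normalForms f) := by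
  intro c c' hle hc c'' hc''
  by_contra! hlt
  obtain ⟨e, rfl⟩ := exists_add_of_le hle
  refine (hc (c'' + e) (by rw [map_add, map_add, hc''])).not_gt ?_
  simpa using add_lt_add_right hlt (toLex e)

end NormalForms

section LinearCombination

theorem image_linearCombination_translatedOrthant_zero {G : Type*} [AddCommMonoid G]
    (γ : Fin r → G) (F : Finset (Fin r)) :
    Fintype.linearCombination ℕ γ '' translatedOrthant 0 F = AddSubmonoid.closure (γ '' F) := by
  refine (image_subset_iff.2 fun d hd => ?_).antisymm fun x hx => ?_
  · rw [mem_preimage, Fintype.linearCombination_apply]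
    refine sum_mem fun i _ => ?_
    by_cases hi : i ∈ F
    · exact nsmul_mem (AddSubmonoid.subset_closure (mem_image_of_mem γ hi)) _
    · simp [hd.2 i hi]
  induction hx using AddSubmonoid.closure_induction with
  | mem g hg =>
    obtain ⟨i, hi, rfl⟩ := hg
    refine ⟨Pi.single i 1, ⟨zero_le, fun j hj => Pi.single_eq_of_ne ?_ 1⟩, by simp⟩
    rintro rfl
    exact hj hi
  | zero => exact ⟨0, ⟨le_rfl, fun _ _ => rfl⟩, map_zero _⟩
  | add x y _ _ hx hy =>
    obtain ⟨d, hd, rfl⟩ := hx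
    obtain ⟨d', hd', rfl⟩ := hy
    exact ⟨d + d', ⟨zero_le, fun i hi => by simp [hd.2 i hi, hd'.2 i hi]⟩, map_add _ _ _⟩

theorem image_linearCombination_translatedOrthant {G : Type*} [AddCommMonoid G]
    (γ : Fin r → G) (a : Fin r → ℕ) (F : Finset (Fin r)) :
    Fintype.linearCombination ℕ γ '' translatedOrthant a F =
      (Fintype.linearCombination ℕ γ a + ·) '' AddSubmonoid.closure (γ '' F) := by
  rw [translatedOrthant_eq_image_add, ← image_linearCombination_translatedOrthant_zero,
    image_image, image_image]
  simp only [map_add]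

theorem linearIndepOn_int_of_injOn {G : Type*} [AddCommGroup G] (γ : Fin r → G)
    {F : Finset (Fin r)} (h : InjOn (Fintype.linearCombination ℕ γ) (translatedOrthant 0 F)) :
    LinearIndepOn ℤ γ F := by
  rw [linearIndepOn_iff]
  intro l hl hl0
  have hlF : ∀ i ∉ F, l i = 0 := fun i hi => Finsupp.notMem_support_iff.1 fun h => hi (hl h)
  set pos : Fin r → ℕ := fun i => (l i).toNat
  set neg : Fin r → ℕ := fun i => (-l i).toNat
  have hpos : pos ∈ translatedOrthant 0 F := ⟨zero_le, fun i hi => by simp [pos, hlF i hi]⟩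
  have hneg : neg ∈ translatedOrthant 0 F := ⟨zero_le, fun i hi => by simp [neg, hlF i hi]⟩
  have hsum : Fintype.linearCombination ℕ γ pos = Fintype.linearCombination ℕ γ neg := by
    rw [Finsupp.linearCombination_apply, Finsupp.sum_fintype _ _ (by simp)] at hl0
    rw [← sub_eq_zero, Fintype.linearCombination_apply, Fintype.linearCombination_apply,
      ← Finset.sum_sub_distrib, ← hl0]
    refine Finset.sum_congr rfl fun i _ => ?_
    rw [← natCast_zsmul, ← natCast_zsmul, ← sub_smul]
    congr 1
    simp only [pos, neg]
    omega
  ext i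
  have := congrFun (h hpos hneg hsum) i
  simp only [pos, neg] at this
  simp only [Finsupp.coe_zero, Pi.zero_apply]
  omega

end LinearCombination

end

theorem submonoid_eq_disjoint_union_of_translated_free_submonoids_general
    {G : Type*} [AddCommGroup G] {r : ℕ} (γv : Fin r → G) :
    ∃ (s : ℕ) (σ : Fin s → G) (E : Fin s → Finset G),
      (∀ j, σ j ∈ AddSubmonoid.closure (Set.range γv)) ∧
      (∀ j, (E j : Set G) ⊆ Set.range γv) ∧
      (∀ j, LinearIndependent ℤ (fun g : (E j : Set G) => (g : G))) ∧
      ((AddSubmonoid.closure (Set.range γv) : AddSubmonoid G) : Set G) =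
        ⋃ j, (fun g => σ j + g) ''
          ((AddSubmonoid.closure (E j : Set G) : AddSubmonoid G) : Set G) ∧
      (∀ j j', j ≠ j' →
        Disjoint
          ((fun g => σ j + g) ''
            ((AddSubmonoid.closure (E j : Set G) : AddSubmonoid G) : Set G))
          ((fun g => σ j' + g) ''
            ((AddSubmonoid.closure (E j' : Set G) : AddSubmonoid G) : Set G))) := by
  classical
  set f := Fintype.linearCombination ℕ γv
  have hrange : (AddSubmonoid.closure (range γv) : Set G) = range f := by
    rw [← Submodule.span_nat_eq_addSubmonoidClosure, Submodule.coe_toAddSubmonoid,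
      ← Fintype.range_linearCombination, LinearMap.coe_range]
  obtain ⟨J, _, a, F, hcover, hdisj⟩ := (isLowerSet_normalForms f).hasStanleyDecomposition
  have hsub : ∀ j, translatedOrthant (a j) (F j) ⊆ normalForms f := fun j =>
    hcover ▸ subset_iUnion (fun j => translatedOrthant (a j) (F j)) j
  have himage : ∀ j, (f (a j) + ·) '' AddSubmonoid.closure ((F j).image γv : Set G) =
      f '' translatedOrthant (a j) (F j) := fun j => by
    rw [Finset.coe_image, image_linearCombination_translatedOrthant]
  set e := (Finite.equivFin J).symm
  refine ⟨Nat.card J, fun j => f (a (e j)), fun j => (F (e j)).image γv, fun j => ?_, fun j => ?_,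
    fun j => ?_, ?_, fun j j' hjj' => ?_⟩
  · rw [← SetLike.mem_coe, hrange]
    exact mem_range_self _
  · rw [Finset.coe_image]
    exact image_subset_range _ _
  · rw [Finset.coe_image]
    exact (linearIndepOn_int_of_injOn γv
      ((injOn_normalForms f).mono (hsub _)).translatedOrthant_zero).id_image
  · rw [hrange, ← image_normalForms, hcover, image_iUnion, ← e.surjective.iUnion_comp]
    exact iUnion_congr fun j => (himage (e j)).symm
  · rw [himage, himage]
    exact (hdisj (e.injective.ne hjj')).image (injOn_normalForms f) (hsub _) (hsub _)

/-- **Lemma (disjoint decomposition of finitely generated submonoids).**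
Let `G` be a finitely generated abelian group and `γ₁,…,γ_r ∈ G`.  Then the submonoid
`⟨γ₁,…,γ_r⟩` is a finite *disjoint* union `⨆_j (σ_j + ⟨E_j⟩)`, where each
`σ_j ∈ ⟨γ₁,…,γ_r⟩` and each `E_j ⊆ {γ₁,…,γ_r}` is a `ℤ`-linearly independent subset
(possibly empty), `⟨E_j⟩` being the free submonoid it generates. -/
theorem submonoid_eq_disjoint_union_of_translated_free_submonoids
    {G : Type*} [AddCommGroup G] [AddGroup.FG G] {r : ℕ} (γv : Fin r → G) :
    ∃ (s : ℕ) (σ : Fin s → G) (E : Fin s → Finset G),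
      (∀ j, σ j ∈ AddSubmonoid.closure (Set.range γv)) ∧
      (∀ j, (E j : Set G) ⊆ Set.range γv) ∧
      (∀ j, LinearIndependent ℤ (fun g : (E j : Set G) => (g : G))) ∧
      ((AddSubmonoid.closure (Set.range γv) : AddSubmonoid G) : Set G) =
        ⋃ j, (fun g => σ j + g) ''
          ((AddSubmonoid.closure (E j : Set G) : AddSubmonoid G) : Set G) ∧
      (∀ j j', j ≠ j' →
        Disjoint
          ((fun g => σ j + g) ''
            ((AddSubmonoid.closure (E j : Set G) : AddSubmonoid G) : Set G))
          ((fun g => σ j' + g) ''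
            ((AddSubmonoid.closure (E j' : Set G) : AddSubmonoid G) : Set G))) :=
  submonoid_eq_disjoint_union_of_translated_free_submonoids_general γv
end

section
/- Let G be a finitely generated abelian group and let E₁, …, E_s be (finite, non-empty) tuples of elements of G, with E_i = (ν_{i,1}, …, ν_{i,q_i}). For a tuple E = (ν₁, …, ν_q) write ΔE = (ν₂ − ν₁, …, ν_q − ν_{q−1}) (the empty tuple if q ≤ 1). Let e₁, …, e_s be the standard basis of ℤ^s. Then the concatenated tuple of elements of G × ℤ^s obtained by listing (ν_{i,j}, e_i) for i = 1, …, s and j = 1, …, q_i is ℤ-linearly independent if and only if the concatenated tuple ΔE₁ | ⋯ | ΔE_s of elements of G is ℤ-linearly independent. Moreover, these equivalent conditions imply: whenever c_i, c'_i ∈ ℕ^{q_i} satisfy |c_i| = |c'_i| for all i and (c₁, …, c_s) ≠ (c'₁, …, c'_s), one has c₁·E₁ + ⋯ + c_s·E_s ≠ c'₁·E₁ + ⋯ + c'_s·E_s, where c·E = Σ_j c_j ν_j and |c| = Σ_j c_j. -/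
open Finset

private lemma tele {M : Type*} [AddCommGroup M] (m : ℕ) (g : ℕ → ℤ) (f : ℕ → M) :
    ∑ k ∈ range m, g k • (f (k+1) - f k)
      = ∑ j ∈ range (m+1),
          ((if j < m then -g j else 0) + (if 0 < j then g (j-1) else 0)) • f j := by
  induction m with
  | zero => simp
  | succ m ih =>
      rw [sum_range_succ, ih]
      conv_rhs => rw [sum_range_succ, sum_range_succ]
      rw [sum_range_succ]
      have h1 : ∑ j ∈ range m, ((if j < m+1 then -g j else 0) + (if 0 < j then g (j-1) else 0)) • f j
          = ∑ j ∈ range m, ((if j < m then -g j else 0) + (if 0 < j then g (j-1) else 0)) • f j := by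
        refine sum_congr rfl fun j hj => ?_
        have := mem_range.mp hj
        simp [this, Nat.lt_succ_of_lt this]
      rw [h1]
      simp only [lt_irrefl, if_neg, Nat.lt_succ_self, if_pos, Nat.lt_irrefl, if_false, if_true,
        Nat.add_sub_cancel, Nat.succ_pos, zero_add, neg_add_rev]
      rw [smul_sub, add_smul, neg_smul]
      abel

private lemma sum_sigma_univ {α : Type*} [AddCommMonoid α] {ι : Type*} [Fintype ι]
    {n : ι → Type*} [∀ i, Fintype (n i)] (w : (Σ i, n i) → α) :
    ∑ p, w p = ∑ i, ∑ j, w ⟨i, j⟩ := by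
  rw [← Finset.univ_sigma_univ, Finset.sum_sigma]

private lemma sum_single {s : ℕ} {q : Fin s → ℕ} (b : (Σ i : Fin s, Fin (q i)) → ℤ) (i : Fin s) :
    (∑ p : Σ i : Fin s, Fin (q i), b p • (Pi.single p.1 (1:ℤ) : Fin s → ℤ)) i
      = ∑ j, b ⟨i, j⟩ := by
  rw [sum_sigma_univ (w := fun p : Σ i : Fin s, Fin (q i) => b p • (Pi.single p.1 (1:ℤ) : Fin s → ℤ))]
  rw [Finset.sum_apply]
  simp only [Finset.sum_apply, Pi.smul_apply, Pi.single_apply, smul_eq_mul, mul_ite, mul_one, mul_zero]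
  have h1 : ∀ x : Fin s, (∑ j : Fin (q x), if i = x then b ⟨x, j⟩ else 0)
      = if i = x then ∑ j : Fin (q x), b ⟨x, j⟩ else 0 := by
    intro x; split <;> simp
  rw [Finset.sum_congr rfl (fun x _ => h1 x), Finset.sum_ite_eq]
  simp

private lemma fin_sum_eq_range {M : Type*} [AddCommMonoid M] (n : ℕ) (v : Fin n → M) :
    ∑ j, v j = ∑ k ∈ range n, (if h : k < n then v ⟨k, h⟩ else 0) := by
  rw [← Fin.sum_univ_eq_sum_range]
  exact Finset.sum_congr rfl fun j _ => by simp

/-- **Remark (linear independence of lifted tuples and difference tuples).**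
Let `E₁,…,E_s` be nonempty tuples of elements of a finitely generated abelian group `G`,
with `E_i = (ν_{i,1},…,ν_{i,q_i})`.  The concatenated tuple of the `(ν_{i,j}, e_i)` in
`G × ℤ^s` is `ℤ`-linearly independent iff the concatenation `ΔE₁ | ⋯ | ΔE_s` of the
difference tuples is `ℤ`-linearly independent.  Moreover these equivalent conditions
imply that whenever `cᵢ, c'ᵢ ∈ ℕ^{qᵢ}` satisfy `|cᵢ| = |c'ᵢ|` for all `i` and
`(c₁,…,c_s) ≠ (c'₁,…,c'_s)`, then `c₁·E₁ + ⋯ + c_s·E_s ≠ c'₁·E₁ + ⋯ + c'_s·E_s`. -/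
theorem linearIndependent_lift_iff_differences_and_injectivity
    {G : Type*} [AddCommGroup G] [AddGroup.FG G] {s : ℕ}
    (q : Fin s → ℕ) (hq : ∀ i, 0 < q i) (E : (i : Fin s) → Fin (q i) → G) :
    (LinearIndependent ℤ (fun p : (Σ i : Fin s, Fin (q i)) =>
        ((E p.1 p.2, Pi.single p.1 (1 : ℤ)) : G × (Fin s → ℤ))) ↔
      LinearIndependent ℤ (fun p : (Σ i : Fin s, Fin (q i - 1)) =>
        E p.1 ⟨p.2.1 + 1, by have := p.2.2; omega⟩ -
          E p.1 ⟨p.2.1, by have := p.2.2; omega⟩)) ∧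
    (LinearIndependent ℤ (fun p : (Σ i : Fin s, Fin (q i)) =>
        ((E p.1 p.2, Pi.single p.1 (1 : ℤ)) : G × (Fin s → ℤ))) →
      ∀ c c' : (i : Fin s) → Fin (q i) → ℕ,
        (∀ i, ∑ j, c i j = ∑ j, c' i j) →
        (∑ i, ∑ j, c i j • E i j) = (∑ i, ∑ j, c' i j • E i j) → c = c') := by
  classical
  simp only [Fintype.linearIndependent_iff]
  -- padded version of `E`
  set f : Fin s → ℕ → G := fun i k => if h : k < q i then E i ⟨k, h⟩ else 0 with hfdef
  have hsum : ∀ w : (Σ i : Fin s, Fin (q i)) → ℤ,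
      ∑ p, w p • ((E p.1 p.2, Pi.single p.1 (1:ℤ)) : G × (Fin s → ℤ))
        = (∑ p, w p • E p.1 p.2, ∑ p, w p • (Pi.single p.1 (1:ℤ) : Fin s → ℤ)) := by
    intro w
    refine Prod.ext ?_ ?_
    · rw [Prod.fst_sum]; rfl
    · rw [Prod.snd_sum]; rfl
  refine ⟨⟨?_, ?_⟩, ?_⟩
  · -- forward: lifted LI → difference LI
    intro hA g hg
    set gn : (i : Fin s) → ℕ → ℤ :=
      fun i k => if h : k < q i - 1 then g ⟨i, ⟨k, h⟩⟩ else 0 with hgn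
    set a : (Σ i : Fin s, Fin (q i)) → ℤ :=
      fun p => -gn p.1 p.2 + (if 0 < (p.2 : ℕ) then gn p.1 ((p.2 : ℕ) - 1) else 0) with ha
    have haz : ∀ p, a p = 0 := by
      apply hA
      rw [hsum, Prod.mk_eq_zero]
      constructor
      · -- first components
        rw [sum_sigma_univ (w := fun p : Σ i : Fin s, Fin (q i) => a p • E p.1 p.2)]
        have hi : ∀ i : Fin s, ∑ j : Fin (q i), a ⟨i, j⟩ • E i j
            = ∑ k : Fin (q i - 1), g ⟨i, k⟩ •
                (E i ⟨(k : ℕ) + 1, by have := k.2; omega⟩ - E i ⟨(k : ℕ), by have := k.2; omega⟩) := by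
          intro i
          have hqi : q i = (q i - 1) + 1 := by have := hq i; omega
          calc ∑ j : Fin (q i), a ⟨i, j⟩ • E i j
              = ∑ jn ∈ range ((q i - 1) + 1),
                  ((if jn < q i - 1 then -gn i jn else 0)
                    + if 0 < jn then gn i (jn - 1) else 0) • f i jn := by
                rw [fin_sum_eq_range (q i) (fun j => a ⟨i, j⟩ • E i j),
                  show (range (q i)) = range ((q i - 1) + 1) from by rw [← hqi]]
                refine Finset.sum_congr rfl fun jn hjn => ?_
                have hjq : jn < q i := by have := mem_range.mp hjn; omega
                rw [dif_pos hjq]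
                have hz : ¬ jn < q i - 1 → gn i jn = 0 := by
                  intro h; simp only [hgn]; rw [dif_neg h]
                have h1 : (if jn < q i - 1 then -gn i jn else 0) = -gn i jn := by
                  split
                  · rfl
                  · rw [hz (by omega), neg_zero]
                rw [h1]
                have h2 : f i jn = E i ⟨jn, hjq⟩ := by
                  simp only [hfdef]; rw [dif_pos hjq]
                rw [h2]
            _ = ∑ k ∈ range (q i - 1), gn i k • (f i (k + 1) - f i k) :=
                (tele (q i - 1) (gn i) (f i)).symm
            _ = ∑ k : Fin (q i - 1), g ⟨i, k⟩ •
                  (E i ⟨(k : ℕ) + 1, by have := k.2; omega⟩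
                    - E i ⟨(k : ℕ), by have := k.2; omega⟩) := by
                rw [fin_sum_eq_range (q i - 1)]
                refine Finset.sum_congr rfl fun k hk => ?_
                have hk' : k < q i - 1 := mem_range.mp hk
                rw [dif_pos hk']
                have h1 : f i (k + 1) = E i ⟨k + 1, by omega⟩ := by
                  simp only [hfdef]; rw [dif_pos (by omega : k + 1 < q i)]
                have h2 : f i k = E i ⟨k, by omega⟩ := by
                  simp only [hfdef]; rw [dif_pos (by omega : k < q i)]
                rw [h1, h2]
                simp only [hgn]
                rw [dif_pos hk']
        rw [Finset.sum_congr rfl fun i _ => hi i]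
        exact (sum_sigma_univ _).symm.trans hg
      · -- second components
        funext i
        rw [sum_single a i]
        have : ∑ j : Fin (q i), a ⟨i, j⟩ = 0 := by
          rw [fin_sum_eq_range (q i) (fun j => a ⟨i, j⟩)]
          have hqi : q i = (q i - 1) + 1 := by have := hq i; omega
          rw [show (range (q i)) = range ((q i - 1) + 1) from by rw [← hqi]]
          have e1 : ∀ k ∈ range ((q i - 1) + 1),
              (if h : k < q i then a ⟨i, ⟨k, h⟩⟩ else 0)
                = -gn i k + (if 0 < k then gn i (k - 1) else 0) := by
            intro k hk
            have hkq : k < q i := by have := mem_range.mp hk; omega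
            rw [dif_pos hkq]
          rw [Finset.sum_congr rfl e1, Finset.sum_add_distrib]
          have hpad : gn i (q i - 1) = 0 := by
            simp only [hgn]; rw [dif_neg (by omega)]
          have hA1 : ∑ k ∈ range ((q i - 1) + 1), (-gn i k)
              = -∑ k ∈ range (q i - 1), gn i k := by
            rw [Finset.sum_range_succ, hpad, neg_zero, add_zero, Finset.sum_neg_distrib]
          have hA2 : ∑ k ∈ range ((q i - 1) + 1), (if 0 < k then gn i (k - 1) else 0)
              = ∑ k ∈ range (q i - 1), gn i k := by
            rw [Finset.sum_range_succ']
            simp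
          rw [hA1, hA2]
          ring
        exact this
    intro p
    obtain ⟨i, k⟩ := p
    have hgn0 : ∀ m : ℕ, gn i m = 0 := by
      intro m
      induction m with
      | zero =>
          have h0 := haz ⟨i, ⟨0, hq i⟩⟩
          rw [ha] at h0
          simpa using h0
      | succ m ihm =>
          by_cases hm : m + 1 < q i - 1
          · have h0 := haz ⟨i, ⟨m + 1, by omega⟩⟩
            rw [ha] at h0
            simp only [Nat.succ_pos, if_true, Nat.add_sub_cancel] at h0
            have : gn i (m + 1) = gn i m := by omega
            rw [this, ihm]
          · simp only [hgn]; rw [dif_neg hm]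
    have : g ⟨i, k⟩ = gn i k := by simp only [hgn]; rw [dif_pos k.2]
    rw [this, hgn0]
  · -- backward: difference LI → lifted LI
    intro hB a ha
    rw [hsum, Prod.mk_eq_zero] at ha
    obtain ⟨ha1, ha2⟩ := ha
    have hrow : ∀ i, ∑ j : Fin (q i), a ⟨i, j⟩ = 0 := by
      intro i
      have := congrFun ha2 i
      rwa [sum_single a i] at this
    set an : (i : Fin s) → ℕ → ℤ :=
      fun i k => if h : k < q i then a ⟨i, ⟨k, h⟩⟩ else 0 with han
    have hrow' : ∀ i, ∑ k ∈ range (q i), an i k = 0 := by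
      intro i
      rw [← hrow i, fin_sum_eq_range (q i) (fun j => a ⟨i, j⟩)]
    set S : Fin s → ℕ → ℤ := fun i k => ∑ j ∈ range (k+1), an i j with hS
    set g : (Σ i : Fin s, Fin (q i - 1)) → ℤ := fun p => -(S p.1 p.2) with hg
    have hgz : ∀ p, g p = 0 := by
      apply hB
      rw [sum_sigma_univ (w := fun p : Σ i : Fin s, Fin (q i - 1) => g p •
        (E p.1 ⟨(p.2 : ℕ) + 1, by have := p.2.2; omega⟩ - E p.1 ⟨(p.2 : ℕ), by have := p.2.2; omega⟩))]
      have hi : ∀ i : Fin s, (∑ k : Fin (q i - 1), g ⟨i, k⟩ •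
          (E i ⟨(k : ℕ) + 1, by have := k.2; omega⟩ - E i ⟨(k : ℕ), by have := k.2; omega⟩))
            = ∑ j : Fin (q i), a ⟨i, j⟩ • E i j := by
        intro i
        rw [fin_sum_eq_range (q i - 1), fin_sum_eq_range (q i) (fun j => a ⟨i, j⟩ • E i j)]
        have step1 : ∑ k ∈ range (q i - 1),
            (if h : k < q i - 1 then g ⟨i, ⟨k, h⟩⟩ •
              (E i ⟨k + 1, by omega⟩ - E i ⟨k, by omega⟩) else 0)
              = ∑ k ∈ range (q i - 1), (fun k => -(S i k)) k • (f i (k+1) - f i k) := by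
          refine Finset.sum_congr rfl fun k hk => ?_
          have hk' : k < q i - 1 := mem_range.mp hk
          rw [dif_pos hk']
          have h1 : f i (k + 1) = E i ⟨k + 1, by omega⟩ := by
            simp only [hfdef]; rw [dif_pos (by omega : k + 1 < q i)]
          have h2 : f i k = E i ⟨k, by omega⟩ := by
            simp only [hfdef]; rw [dif_pos (by omega : k < q i)]
          rw [h1, h2]
        rw [step1, tele (q i - 1) (fun k => -(S i k)) (f i)]
        have hqi : (q i - 1) + 1 = q i := by have := hq i; omega
        rw [show (range ((q i - 1) + 1)) = range (q i) from by rw [hqi]]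
        refine Finset.sum_congr rfl fun j hj => ?_
        have hjq : j < q i := mem_range.mp hj
        rw [dif_pos hjq]
        have han' : ∀ (jj : ℕ) (h : jj < q i), an i jj = a ⟨i, ⟨jj, h⟩⟩ := fun jj h => by
          simp only [han]; rw [dif_pos h]
        rw [← han' j hjq]
        congr 1
        · -- coefficient equality
          simp only [neg_neg]
          rcases Nat.eq_zero_or_pos j with hj0 | hj0
          · subst hj0
            simp only [Nat.lt_irrefl, if_false, add_zero]
            by_cases hm : 0 < q i - 1
            · rw [if_pos hm]
              simp only [hS]
              rw [Finset.sum_range_one]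
            · rw [if_neg hm]
              have hq1 : q i = 1 := by have := hq i; omega
              have htot := hrow' i
              rw [hq1, Finset.sum_range_one] at htot
              linarith
          · rw [if_pos hj0]
            by_cases hjm : j < q i - 1
            · rw [if_pos hjm]
              simp only [hS]
              rw [show j - 1 + 1 = j from by omega, Finset.sum_range_succ]
              ring
            · rw [if_neg hjm]
              have htot := hrow' i
              simp only [hS]
              rw [show j - 1 + 1 = j from by omega]
              rw [show range (q i) = range (j + 1) from by rw [show j + 1 = q i from by omega],
                Finset.sum_range_succ] at htot
              linarith
        · -- vector equality
          simp only [hfdef]; rw [dif_pos hjq]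
      rw [Finset.sum_congr rfl fun i _ => hi i]
      exact (sum_sigma_univ _).symm.trans ha1
    intro p
    obtain ⟨i, j⟩ := p
    have hSz : ∀ k, k < q i - 1 → S i k = 0 := by
      intro k hk
      have := hgz ⟨i, ⟨k, hk⟩⟩
      simp only [hg] at this
      linarith
    have hanz : ∀ k, k < q i → an i k = 0 := by
      intro k hk
      have htot := hrow' i
      rcases Nat.eq_zero_or_pos k with h0 | h0
      · subst h0
        by_cases hm : 0 < q i - 1
        · have := hSz 0 hm
          simp only [hS] at this; rw [Finset.sum_range_one] at this
          exact this
        · have hq1 : q i = 1 := by have := hq i; omega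
          rw [hq1, Finset.sum_range_one] at htot
          exact htot
      · obtain ⟨m, rfl⟩ : ∃ m, k = m + 1 := ⟨k - 1, by omega⟩
        have hSm : S i m = 0 := hSz m (by omega)
        by_cases hm1 : m + 1 < q i - 1
        · have hSm1 : S i (m+1) = 0 := hSz (m+1) hm1
          have e1 : S i (m + 1) = S i m + an i (m + 1) := by
            simp only [hS]
            rw [Finset.sum_range_succ]
          rw [hSm1, hSm, zero_add] at e1
          exact e1.symm
        · simp only [hS] at hSm
          rw [show range (q i) = range (m + 1 + 1) from
            by rw [show m + 1 + 1 = q i from by omega], Finset.sum_range_succ] at htot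
          linarith
    have : a ⟨i, j⟩ = an i j := by simp only [han]; rw [dif_pos j.2]
    rw [this, hanz j j.2]
  · -- injectivity
    intro hA c c' hrowcc heq
    have h0 : ∀ p : Σ i : Fin s, Fin (q i), (c p.1 p.2 : ℤ) - c' p.1 p.2 = 0 := by
      apply hA
      rw [hsum, Prod.mk_eq_zero]
      constructor
      · rw [sum_sigma_univ (w := fun p : Σ i : Fin s, Fin (q i) =>
          ((c p.1 p.2 : ℤ) - c' p.1 p.2) • E p.1 p.2)]
        simp only [sub_smul, Finset.sum_sub_distrib, natCast_zsmul]
        rw [sub_eq_zero]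
        exact heq
      · funext i
        rw [sum_single]
        have := hrowcc i
        dsimp only
        rw [Pi.zero_apply, Finset.sum_sub_distrib, sub_eq_zero]
        exact_mod_cast this
    funext i j
    have := h0 ⟨i, j⟩
    dsimp only at this
    omega
end
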